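/- Let L be a torsion-free abelian group, B : L → L → ℤ a ℤ-bilinear map, and δ, γ ∈ L with B(δ, γ) = 1. Let T : L → L be defined by T(η) = η + B(δ, η) • δ. Then {x ∈ L : n • x ∈ (T − id)(L) for some nonzero integer n} = (T − id)(L). -/

import Mathlib

/-!
The image of `T - id` is `{B δ η • δ}`, which is all of `ℤ δ` because `B δ γ = 1`. It is
saturated: if `n • x = m • δ` with `n ≠ 0`, applying the functional `B · γ` gives
`n * B x γ = m`, so `n • x = n • (B x γ • δ)`, and torsion-freeness cancels `n`.
-/

theorem range_apply_smul_eq_range_smul {L : Type*} [AddCommGroup L] (f : L →ₗ[ℤ] ℤ) (δ γ : L)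
    (hf : f γ = 1) : Set.range (fun η : L => f η • δ) = Set.range (fun k : ℤ => k • δ) := by
  refine Set.Subset.antisymm (Set.range_subset_iff.2 fun η => ⟨f η, rfl⟩) ?_
  rintro _ ⟨k, rfl⟩
  exact ⟨k • γ, by simp [hf]⟩

theorem eq_apply_smul_of_smul_eq_smul {L : Type*} [AddCommGroup L]
    (htf : ∀ (n : ℤ) (x : L), n ≠ 0 → n • x = 0 → x = 0)
    (f : L →ₗ[ℤ] ℤ) {δ x : L} (hf : f δ = 1) {n m : ℤ} (hn : n ≠ 0) (h : n • x = m • δ) :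
    x = f x • δ := by
  have hm : n * f x = m := by simpa [hf] using congrArg f h
  have hnx : n • x = n • (f x • δ) := by rw [h, smul_smul, hm]
  exact sub_eq_zero.1 (htf n _ hn (by rw [smul_sub, hnx, sub_self]))

/-- Let `L` be a torsion-free abelian group, `B : L → L → ℤ` a `ℤ`-bilinear map, and
`δ, γ ∈ L` with `B δ γ = 1`. Let `T : L → L` be defined by `T η = η + B δ η • δ`. Then
`{x ∈ L : n • x ∈ (T - id) L` for some nonzero integer `n} = (T - id) L`. -/
theorem statement4 {L : Type*} [AddCommGroup L]
    (htf : ∀ (n : ℤ) (x : L), n ≠ 0 → n • x = 0 → x = 0)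
    (B : L →ₗ[ℤ] L →ₗ[ℤ] ℤ) (δ γ : L) (hB : B δ γ = 1) :
    {x : L | ∃ n : ℤ, n ≠ 0 ∧
        n • x ∈ Set.range (fun η : L => (η + B δ η • δ) - η)} =
      Set.range (fun η : L => (η + B δ η • δ) - η) := by
  simp only [add_sub_cancel_left, range_apply_smul_eq_range_smul (B δ) δ γ hB]
  ext x
  constructor
  · rintro ⟨n, hn, m, hm⟩
    have hγ : B.flip γ δ = 1 := by simpa using hB
    exact ⟨B.flip γ x, (eq_apply_smul_of_smul_eq_smul htf (B.flip γ) hγ hn hm.symm).symm⟩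
  · rintro ⟨m, rfl⟩
    exact ⟨1, one_ne_zero, m, by rw [one_smul]⟩
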